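/- Let T > 0, σ > 0 and x₀ ∈ (0, 1). Let (Ω, F, P) be a probability space carrying a standard Brownian motion W : [0,T] × Ω → ℝ with continuous sample paths. For each N ∈ ℕ (N ≥ 1) define the Euler approximation Y^N_0 := x₀ and Y^N_{k+1} := Y^N_k + σ·Y^N_k·(1 − Y^N_k)·(W_{(k+1)T/N} − W_{kT/N}) for k = 0, 1, …, N−1. Then lim_{N → ∞} E[|Y^N_N|^p] = ∞ for every p ∈ [1, ∞). -/

import Mathlib

/-!
Write `b y = σ y (1 - y)` and `ΔW_k` for the Brownian increments, centred Gaussians of variance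
`T / N`, each independent of `Y_k`. Since `ΔW_k` is symmetric, `Y_k ± b(Y_k) ΔW_k` have the same
law, and `2 |b(Y_k) ΔW_k| ≤ |Y_k + b(Y_k) ΔW_k| + |Y_k - b(Y_k) ΔW_k|` gives
`E|Y_{k+1}|^r ≥ ½ E|b(Y_k)|^r E|ΔW_k|^r`. As `|b y| ≥ σ y² / 2` for `|y| ≥ 2`, this turns a bound
`E|Y_k|^{2r} ≥ R^{2r}` into `E|Y_{k+1}|^r ≥ R^r` as soon as `R ≳ √N`. The recursion is started by
the first step: `Y_1 - x₀` is Gaussian, and its moment of order `r = p 2^{N-1}` is of size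
`(r T / N)^{r/2}`, which exceeds `(C √N)^r` once `2^N ≫ N²`. Halving the exponent `N - 1` times
yields `E|Y_N|^p ≥ (C √N)^p → ∞`.
-/

open MeasureTheory ProbabilityTheory Filter

/-- `W` is a standard Brownian motion on the time interval `[0, T]` with
continuous sample paths: each `W t` is measurable, `W 0 = 0`, the sample paths
are continuous on `[0, T]`, the increment `W t - W s` is centered Gaussian with
variance `t - s` for `0 ≤ s ≤ t ≤ T`, and increments over disjoint consecutive
time intervals are independent. -/
def IsStandardBrownianMotion {Ω : Type*} [MeasurableSpace Ω] (P : Measure Ω)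
    (T : ℝ) (W : ℝ → Ω → ℝ) : Prop :=
  (∀ t, t ∈ Set.Icc 0 T → Measurable (W t)) ∧
  (∀ ω, W 0 ω = 0) ∧
  (∀ ω, ContinuousOn (fun t => W t ω) (Set.Icc 0 T)) ∧
  (∀ s t : ℝ, 0 ≤ s → s ≤ t → t ≤ T →
    Measure.map (fun ω => W t ω - W s ω) P = gaussianReal 0 (Real.toNNReal (t - s))) ∧
  (∀ (n : ℕ) (t : Fin (n + 1) → ℝ), Monotone t → (∀ i, t i ∈ Set.Icc 0 T) →
    iIndepFun
      (fun (i : Fin n) => fun ω => W (t i.succ) ω - W (t i.castSucc) ω) P)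

open Real
open scoped NNReal ENNReal

lemma abs_rpow_le_abs_add_rpow_add_abs_sub_rpow {r : ℝ} (hr : 0 ≤ r) (y u : ℝ) :
    |u| ^ r ≤ |y + u| ^ r + |y - u| ^ r := by
  have h2u : 2 * |u| ≤ |y + u| + |y - u| := by
    calc 2 * |u| = |(y + u) - (y - u)| := by
          rw [show (y + u) - (y - u) = 2 * u by ring, abs_mul, abs_two]
      _ ≤ |y + u| + |y - u| := abs_sub _ _
  rcases le_total |y + u| |y - u| with h | h
  · have := rpow_le_rpow (abs_nonneg u) (by linarith : |u| ≤ |y - u|) hr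
    linarith [rpow_nonneg (abs_nonneg (y + u)) r]
  · have := rpow_le_rpow (abs_nonneg u) (by linarith : |u| ≤ |y + u|) hr
    linarith [rpow_nonneg (abs_nonneg (y - u)) r]

lemma sq_le_max_two_mul_abs_mul_one_sub (y : ℝ) : y ^ 2 ≤ max (2 * |y * (1 - y)|) 4 := by
  rcases le_or_gt |y| 2 with hy | hy
  · exact le_max_of_le_right (by nlinarith [sq_abs y, abs_nonneg y])
  · refine le_max_of_le_left ?_
    have h1y : |y| - 1 ≤ |1 - y| := by
      simpa [abs_sub_comm] using abs_sub_abs_le_abs_sub y 1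
    rw [abs_mul, ← sq_abs]
    nlinarith [abs_nonneg y]

lemma abs_rpow_two_mul_le_abs_mul_one_sub_rpow {σ : ℝ} (hσ : 0 < σ) {r : ℝ} (hr : 0 ≤ r)
    (y : ℝ) : |y| ^ (2 * r) ≤ (2 / σ) ^ r * |σ * y * (1 - y)| ^ r + 4 ^ r := by
  have hb : (2 / σ) ^ r * |σ * y * (1 - y)| ^ r = (2 * |y * (1 - y)|) ^ r := by
    rw [← mul_rpow (by positivity) (abs_nonneg _), mul_assoc σ, abs_mul, abs_of_pos hσ,
      ← mul_assoc, div_mul_cancel₀ _ hσ.ne']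
  rw [hb, rpow_mul (abs_nonneg y), rpow_two, sq_abs]
  calc (y ^ 2) ^ r ≤ (max (2 * |y * (1 - y)|) 4) ^ r :=
        rpow_le_rpow (sq_nonneg y) (sq_le_max_two_mul_abs_mul_one_sub y) hr
    _ ≤ (2 * |y * (1 - y)|) ^ r + 4 ^ r := by
        rcases max_cases (2 * |y * (1 - y)|) 4 with ⟨h, _⟩ | ⟨h, _⟩ <;> rw [h]
        · linarith [rpow_nonneg (show (0 : ℝ) ≤ 4 by norm_num) r]
        · linarith [rpow_nonneg (show (0 : ℝ) ≤ 2 * |y * (1 - y)| by positivity) r]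

lemma exp_one_mul_sqrt_two_pi_le : exp 1 * √(2 * π) ≤ 9 := by
  have hsqrt : √(2 * π) ≤ 3 := by
    rw [sqrt_le_left (by norm_num)]
    nlinarith [pi_lt_d2]
  nlinarith [exp_one_lt_d9, sqrt_nonneg (2 * π)]

lemma eventually_mul_sq_le_two_pow_pred (C : ℝ) :
    ∀ᶠ N : ℕ in atTop, C * (N : ℝ) ^ 2 ≤ 2 ^ (N - 1) := by
  have hlim := (tendsto_pow_const_div_const_pow_of_one_lt 2 one_lt_two).const_mul (2 * C)
  rw [mul_zero] at hlim
  filter_upwards [hlim.eventually (gt_mem_nhds one_pos), eventually_ge_atTop 1] with N hN hN1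
  have h2N : (2 : ℝ) ^ N = 2 * 2 ^ (N - 1) := by rw [← pow_succ', Nat.sub_add_cancel hN1]
  rw [← mul_div_assoc, div_lt_one (by positivity), h2N] at hN
  linarith

lemma eventually_mul_sqrt_le_mul_sqrt_two_pow_pred {c b p T : ℝ} (hc : 0 ≤ c) (hb : b ≠ 0)
    (hp : 0 < p) (hT : 0 < T) :
    ∀ᶠ N : ℕ in atTop, c * √N ≤ |b| * √(p * 2 ^ (N - 1) * (T / N)) := by
  filter_upwards [eventually_ge_atTop 1,
    eventually_mul_sq_le_two_pow_pred (c ^ 2 / (b ^ 2 * p * T))] with N hN hgrowth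
  have hN0 : (0 : ℝ) < N := by exact_mod_cast hN
  have hbpT : 0 < b ^ 2 * p * T := by positivity
  rw [div_mul_eq_mul_div, div_le_iff₀ hbpT] at hgrowth
  rw [← pow_le_pow_iff_left₀ (by positivity) (by positivity) two_ne_zero, mul_pow, mul_pow,
    sq_sqrt hN0.le, sq_abs, sq_sqrt (by positivity),
    show b ^ 2 * (p * 2 ^ (N - 1) * (T / N)) = 2 ^ (N - 1) * (b ^ 2 * p * T) / N by field_simp,
    le_div_iff₀ hN0]
  linarith

lemma natCast_mul_div_mem_Icc {T : ℝ} (hT : 0 ≤ T) {k N : ℕ} (hk : k ≤ N) :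
    (k : ℝ) * T / N ∈ Set.Icc 0 T := by
  refine ⟨by positivity, div_le_of_le_mul₀ (Nat.cast_nonneg N) hT ?_⟩
  rw [mul_comm]
  exact mul_le_mul_of_nonneg_left (Nat.cast_le.mpr hk) hT

lemma natCast_add_one_mul_div_mem_Icc {T : ℝ} (hT : 0 ≤ T) {k N : ℕ} (hk : k < N) :
    ((k : ℝ) + 1) * T / N ∈ Set.Icc 0 T := by
  exact_mod_cast natCast_mul_div_mem_Icc hT (Nat.succ_le_of_lt hk)

lemma gaussianPDFReal_zero_le_of_abs_le {v : ℝ≥0} {x y : ℝ} (h : |x| ≤ |y|) :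
    gaussianPDFReal 0 v y ≤ gaussianPDFReal 0 v x := by
  have hsq : x ^ 2 ≤ y ^ 2 := sq_le_sq.mpr h
  simp only [gaussianPDFReal, sub_zero]
  gcongr

lemma ofReal_le_gaussianReal_Icc {v : ℝ≥0} (hv : v ≠ 0) {a : ℝ} (ha : 0 ≤ a) :
    ENNReal.ofReal (exp (-(a + √v) ^ 2 / (2 * v)) / √(2 * π))
      ≤ gaussianReal 0 v (Set.Icc a (a + √v)) := by
  have hpdf : √v * gaussianPDFReal 0 v (a + √v) = exp (-(a + √v) ^ 2 / (2 * v)) / √(2 * π) := by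
    rw [gaussianPDFReal, sub_zero, sqrt_mul (by positivity) (v : ℝ)]
    field_simp
  calc ENNReal.ofReal (exp (-(a + √v) ^ 2 / (2 * v)) / √(2 * π))
      = ∫⁻ _ in Set.Icc a (a + √v), ENNReal.ofReal (gaussianPDFReal 0 v (a + √v)) := by
        rw [setLIntegral_const, Real.volume_Icc, add_sub_cancel_left, ← hpdf, mul_comm,
          ENNReal.ofReal_mul (gaussianPDFReal_nonneg 0 v _)]
    _ ≤ ∫⁻ x in Set.Icc a (a + √v), gaussianPDF 0 v x := by
        refine setLIntegral_mono (measurable_gaussianPDF 0 v) fun x hx => ?_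
        refine ENNReal.ofReal_le_ofReal (gaussianPDFReal_zero_le_of_abs_le ?_)
        rw [abs_of_nonneg (ha.trans hx.1), abs_of_nonneg (by positivity)]
        exact hx.2
    _ = gaussianReal 0 v (Set.Icc a (a + √v)) := (gaussianReal_apply 0 hv _).symm

lemma ofReal_le_lintegral_abs_rpow_gaussianReal {v : ℝ≥0} (hv : v ≠ 0) {r : ℝ} (hr : 0 ≤ r) :
    ENNReal.ofReal ((√(r * v) / 3) ^ r / 9) ≤ ∫⁻ x, ENNReal.ofReal (|x| ^ r) ∂gaussianReal 0 v := by
  have hv0 : (0 : ℝ) < v := by positivity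
  -- On `[a, a + √v]` with `a = √(r v)`, `|x| ^ r ≥ a ^ r` and the density is at least its value
  -- at `a + √v`.
  set a := √(r * v) with ha
  have hexp : exp (-(r + 1)) / √(2 * π) ≤ exp (-(a + √v) ^ 2 / (2 * v)) / √(2 * π) := by
    have hsq : (a + √v) ^ 2 / (2 * v) = (√r + 1) ^ 2 / 2 := by
      rw [ha, sqrt_mul hr, show (√r * √v + √v) ^ 2 = (√r + 1) ^ 2 * √v ^ 2 by ring,
        sq_sqrt hv0.le]
      field_simp
    gcongr
    rw [neg_div, hsq, neg_le_neg_iff]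
    nlinarith [sq_sqrt hr, sq_nonneg (√r - 1)]
  have hconst : (a / 3) ^ r / 9 ≤ a ^ r * (exp (-(r + 1)) / √(2 * π)) := by
    have h3 : exp r ≤ 3 ^ r := by
      rw [← exp_one_rpow]
      exact rpow_le_rpow (exp_pos 1).le (exp_one_lt_d9.le.trans (by norm_num)) hr
    have h9 := exp_one_mul_sqrt_two_pi_le
    rw [div_rpow (sqrt_nonneg _) (by norm_num), div_div, div_eq_mul_inv]
    gcongr a ^ r * ?_
    rw [neg_add, exp_add, exp_neg, exp_neg, le_div_iff₀ (by positivity)]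
    field_simp
    nlinarith [exp_pos r, exp_pos 1, sqrt_nonneg (2 * π)]
  calc ENNReal.ofReal ((a / 3) ^ r / 9)
      ≤ ENNReal.ofReal (a ^ r) * ENNReal.ofReal (exp (-(a + √v) ^ 2 / (2 * v)) / √(2 * π)) := by
        rw [← ENNReal.ofReal_mul (by positivity)]
        exact ENNReal.ofReal_le_ofReal (hconst.trans (by gcongr))
    _ ≤ ENNReal.ofReal (a ^ r) * gaussianReal 0 v (Set.Icc a (a + √v)) :=
        mul_le_mul_right (ofReal_le_gaussianReal_Icc hv (sqrt_nonneg _)) _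
    _ = ∫⁻ _ in Set.Icc a (a + √v), ENNReal.ofReal (a ^ r) ∂gaussianReal 0 v := by
        rw [setLIntegral_const, mul_comm]
    _ ≤ ∫⁻ x in Set.Icc a (a + √v), ENNReal.ofReal (|x| ^ r) ∂gaussianReal 0 v := by
        refine setLIntegral_mono (by fun_prop) fun x hx => ENNReal.ofReal_le_ofReal ?_
        rw [abs_of_nonneg ((sqrt_nonneg _).trans hx.1)]
        exact rpow_le_rpow (sqrt_nonneg _) hx.1 hr
    _ ≤ ∫⁻ x, ENNReal.ofReal (|x| ^ r) ∂gaussianReal 0 v := setLIntegral_le_lintegral _ _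

lemma measurable_iSup_comap_of_euler {Ω : Type*} {N : ℕ} {D Z : ℕ → Ω → ℝ} {σ x₀ : ℝ}
    (hZ0 : ∀ ω, Z 0 ω = x₀)
    (hZ : ∀ k < N, ∀ ω, Z (k + 1) ω = Z k ω + σ * Z k ω * (1 - Z k ω) * D k ω) :
    ∀ k ≤ N, Measurable[⨆ i ∈ {i : Fin N | (i : ℕ) < k}, MeasurableSpace.comap (D i) inferInstance]
      (Z k) := by
  intro k
  induction k with
  | zero =>
    intro _
    rw [funext hZ0]
    exact measurable_const
  | succ k ih =>
    intro hk
    set 𝓕 := ⨆ i ∈ {i : Fin N | (i : ℕ) < k + 1}, MeasurableSpace.comap (D i) inferInstance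
    have hZk : Measurable[𝓕] (Z k) := (ih (by omega)).mono
      (biSup_mono fun i (hi : (i : ℕ) < k) => Nat.lt_succ_of_lt hi) le_rfl
    have hDk : Measurable[𝓕] (D k) := Measurable.of_comap_le <|
      le_iSup₂_of_le (⟨k, hk⟩ : Fin N) (Nat.lt_succ_self k) le_rfl
    rw [funext (hZ k hk)]
    exact hZk.add (((measurable_const.mul hZk).mul (measurable_const.sub hZk)).mul hDk)

noncomputable def brownianIncrement {Ω : Type*} (W : ℝ → Ω → ℝ) (T : ℝ) (N k : ℕ) (ω : Ω) : ℝ :=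
  W (((k : ℝ) + 1) * T / N) ω - W ((k : ℝ) * T / N) ω

section

variable {Ω : Type*} [MeasurableSpace Ω] {P : Measure Ω}

lemma ProbabilityTheory.iIndepFun.indepFun_of_measurable_iSup {ι β γ : Type*}
    [MeasurableSpace β] [MeasurableSpace γ] {f : ι → Ω → β} (hf : ∀ i, Measurable (f i))
    (h : iIndepFun f P) {S : Set ι} {j : ι} (hj : j ∉ S) {X : Ω → γ}
    (hX : Measurable[⨆ i ∈ S, MeasurableSpace.comap (f i) ‹_›] X) : IndepFun X (f j) P := by
  have hindep := indep_iSup_of_disjoint (fun i => (hf i).comap_le)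
    ((iIndepFun_iff_iIndep _ f P).mp h) (Set.disjoint_singleton_right.mpr hj)
  rw [iSup_singleton] at hindep
  exact indep_of_indep_of_le_left hindep hX.comap_le

lemma indepFun_of_euler {N : ℕ} {D Z : ℕ → Ω → ℝ} {σ x₀ : ℝ}
    (hD : ∀ k < N, Measurable (D k))
    (hind : iIndepFun (fun i : Fin N => D i) P) (hZ0 : ∀ ω, Z 0 ω = x₀)
    (hZ : ∀ k < N, ∀ ω, Z (k + 1) ω = Z k ω + σ * Z k ω * (1 - Z k ω) * D k ω)
    {k : ℕ} (hk : k < N) : IndepFun (Z k) (D k) P :=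
  hind.indepFun_of_measurable_iSup (f := fun i : Fin N => D i) (j := ⟨k, hk⟩)
    (fun i => hD i i.isLt) (lt_irrefl k) (measurable_iSup_comap_of_euler hZ0 hZ k hk.le)

namespace IsStandardBrownianMotion

variable {T : ℝ} {W : ℝ → Ω → ℝ}

lemma measurable_brownianIncrement (hW : IsStandardBrownianMotion P T W) (hT : 0 ≤ T)
    {N k : ℕ} (hk : k < N) : Measurable (brownianIncrement W T N k) :=
  (hW.1 _ (natCast_add_one_mul_div_mem_Icc hT hk)).sub (hW.1 _ (natCast_mul_div_mem_Icc hT hk.le))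

lemma map_brownianIncrement (hW : IsStandardBrownianMotion P T W) (hT : 0 ≤ T)
    {N k : ℕ} (hk : k < N) :
    P.map (brownianIncrement W T N k) = gaussianReal 0 (T / N).toNNReal := by
  have hle : (k : ℝ) * T / N ≤ ((k : ℝ) + 1) * T / N := by gcongr; linarith
  have h := hW.2.2.2.1 _ _ (natCast_mul_div_mem_Icc hT hk.le).1 hle
    (natCast_add_one_mul_div_mem_Icc hT hk).2
  rwa [show ((k : ℝ) + 1) * T / N - (k : ℝ) * T / N = T / N by ring] at h

lemma iIndepFun_brownianIncrement (hW : IsStandardBrownianMotion P T W) (hT : 0 ≤ T) (N : ℕ) :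
    iIndepFun (fun i : Fin N => brownianIncrement W T N i) P := by
  have hmono : Monotone fun j : Fin (N + 1) => (j : ℝ) * T / N := fun i j hij => by
    dsimp only
    gcongr
    exact_mod_cast hij
  convert hW.2.2.2.2 N _ hmono fun j => natCast_mul_div_mem_Icc hT (Nat.lt_succ_iff.mp j.isLt)
    using 3
  simp [brownianIncrement]

end IsStandardBrownianMotion

variable [IsProbabilityMeasure P]

lemma ProbabilityTheory.IndepFun.lintegral_abs_rpow_mul_le {X D : Ω → ℝ} {b : ℝ → ℝ}
    (hXD : IndepFun X D P) (hX : Measurable X) (hD : Measurable D) (hb : Measurable b)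
    (hDsymm : P.map (fun ω => -D ω) = P.map D) {r : ℝ} (hr : 0 ≤ r) :
    (∫⁻ ω, ENNReal.ofReal (|b (X ω)| ^ r) ∂P) * ∫⁻ ω, ENNReal.ofReal (|D ω| ^ r) ∂P
      ≤ 2 * ∫⁻ ω, ENNReal.ofReal (|X ω + b (X ω) * D ω| ^ r) ∂P := by
  set F : ℝ × ℝ → ℝ≥0∞ := fun z => ENNReal.ofReal (|z.1 + b z.1 * z.2| ^ r)
  have hF : Measurable F := by fun_prop
  have hnegD : Measurable fun ω => -D ω := hD.neg
  have hreflect : ∫⁻ ω, F (X ω, -D ω) ∂P = ∫⁻ ω, F (X ω, D ω) ∂P := by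
    have hXnegD : IndepFun X (fun ω => -D ω) P := hXD.comp measurable_id measurable_neg
    have hlaw : P.map (fun ω => (X ω, -D ω)) = P.map (fun ω => (X ω, D ω)) := by
      rw [(indepFun_iff_map_prod_eq_prod_map_map hX.aemeasurable hnegD.aemeasurable).mp hXnegD,
        (indepFun_iff_map_prod_eq_prod_map_map hX.aemeasurable hD.aemeasurable).mp hXD, hDsymm]
    rw [← lintegral_map hF (hX.prodMk hnegD), hlaw, lintegral_map hF (hX.prodMk hD)]
  have hsplit : (∫⁻ ω, ENNReal.ofReal (|b (X ω)| ^ r) ∂P) * ∫⁻ ω, ENNReal.ofReal (|D ω| ^ r) ∂P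
      = ∫⁻ ω, ENNReal.ofReal (|b (X ω) * D ω| ^ r) ∂P := by
    have hind : IndepFun (fun ω => ENNReal.ofReal (|b (X ω)| ^ r))
        (fun ω => ENNReal.ofReal (|D ω| ^ r)) P :=
      hXD.comp (by fun_prop : Measurable fun y => ENNReal.ofReal (|b y| ^ r))
        (by fun_prop : Measurable fun d : ℝ => ENNReal.ofReal (|d| ^ r))
    rw [← lintegral_mul_eq_lintegral_mul_lintegral_of_indepFun (by fun_prop) (by fun_prop) hind]
    refine lintegral_congr fun ω => ?_
    simp only [Pi.mul_apply]
    rw [← ENNReal.ofReal_mul (by positivity), abs_mul, mul_rpow (abs_nonneg _) (abs_nonneg _)]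
  calc _ = ∫⁻ ω, ENNReal.ofReal (|b (X ω) * D ω| ^ r) ∂P := hsplit
    _ ≤ ∫⁻ ω, (F (X ω, D ω) + F (X ω, -D ω)) ∂P := by
        refine lintegral_mono fun ω => ?_
        simp only [F, mul_neg, ← sub_eq_add_neg]
        rw [← ENNReal.ofReal_add (by positivity) (by positivity)]
        exact ENNReal.ofReal_le_ofReal (abs_rpow_le_abs_add_rpow_add_abs_sub_rpow hr _ _)
    _ = 2 * ∫⁻ ω, ENNReal.ofReal (|X ω + b (X ω) * D ω| ^ r) ∂P := by
        have hFXD : Measurable fun ω => F (X ω, D ω) := hF.comp (hX.prodMk hD)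
        rw [lintegral_add_left hFXD, hreflect, two_mul]

lemma ProbabilityTheory.IndepFun.lintegral_abs_rpow_mul_gaussian_le {X D : Ω → ℝ} {b : ℝ → ℝ}
    (hXD : IndepFun X D P) (hX : Measurable X) (hD : Measurable D) (hb : Measurable b)
    {v : ℝ≥0} (hv : v ≠ 0) (hDlaw : P.map D = gaussianReal 0 v) {r : ℝ} (hr : 0 ≤ r) :
    (∫⁻ ω, ENNReal.ofReal (|b (X ω)| ^ r) ∂P) * ENNReal.ofReal ((√(r * v) / 3) ^ r / 9)
      ≤ 2 * ∫⁻ ω, ENNReal.ofReal (|X ω + b (X ω) * D ω| ^ r) ∂P := by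
  have hDsymm : P.map (fun ω => -D ω) = P.map D := by
    rw [show (fun ω => -D ω) = (fun x => -x) ∘ D from rfl, ← Measure.map_map measurable_neg hD,
      hDlaw, gaussianReal_map_neg, neg_zero]
  have hDmom : ∫⁻ ω, ENNReal.ofReal (|D ω| ^ r) ∂P
      = ∫⁻ x, ENNReal.ofReal (|x| ^ r) ∂gaussianReal 0 v := by
    rw [← hDlaw, lintegral_map (by fun_prop) hD]
  calc _ ≤ (∫⁻ ω, ENNReal.ofReal (|b (X ω)| ^ r) ∂P) * ∫⁻ ω, ENNReal.ofReal (|D ω| ^ r) ∂P := by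
        rw [hDmom]
        gcongr
        exact ofReal_le_lintegral_abs_rpow_gaussianReal hv hr
    _ ≤ _ := hXD.lintegral_abs_rpow_mul_le hX hD hb hDsymm hr

lemma ofReal_rpow_le_lintegral_euler_first_step {D : Ω → ℝ} (hD : Measurable D) {v : ℝ≥0}
    (hv : v ≠ 0) (hDlaw : P.map D = gaussianReal 0 v) {σ x₀ r R : ℝ} (hr : 1 ≤ r) (hR : 0 ≤ R)
    (hRx₀ : 54 * R ≤ |σ * x₀ * (1 - x₀)| * √(r * v)) :
    ENNReal.ofReal (R ^ r) ≤ ∫⁻ ω, ENNReal.ofReal (|x₀ + σ * x₀ * (1 - x₀) * D ω| ^ r) ∂P := by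
  have hr0 : 0 ≤ r := zero_le_one.trans hr
  have hcore := (indepFun_const_left x₀ D).lintegral_abs_rpow_mul_gaussian_le measurable_const hD
    (b := fun y => σ * y * (1 - y)) (by fun_prop) hv hDlaw hr0
  rw [lintegral_const, measure_univ, mul_one, ← ENNReal.ofReal_mul (by positivity)] at hcore
  have hreal : 2 * R ^ r ≤ |σ * x₀ * (1 - x₀)| ^ r * ((√(r * v) / 3) ^ r / 9) := by
    have h18 : 18 * R ≤ |σ * x₀ * (1 - x₀)| * (√(r * v) / 3) := by linarith
    calc 2 * R ^ r = 18 * R ^ r / 9 := by ring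
      _ ≤ 18 ^ r * R ^ r / 9 := by gcongr; exact self_le_rpow_of_one_le (by norm_num) hr
      _ = (18 * R) ^ r / 9 := by rw [mul_rpow (by norm_num) hR]
      _ ≤ (|σ * x₀ * (1 - x₀)| * (√(r * v) / 3)) ^ r / 9 := by gcongr
      _ = _ := by rw [mul_rpow (abs_nonneg _) (by positivity), mul_div_assoc]
  rw [← ENNReal.mul_le_mul_iff_right two_ne_zero ENNReal.ofNat_ne_top]
  calc 2 * ENNReal.ofReal (R ^ r) = ENNReal.ofReal (2 * R ^ r) := by
        rw [ENNReal.ofReal_mul zero_le_two, ENNReal.ofReal_ofNat]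
    _ ≤ _ := (ENNReal.ofReal_le_ofReal hreal).trans hcore

lemma ofReal_rpow_le_lintegral_euler_step {X D : Ω → ℝ} (hXD : IndepFun X D P)
    (hX : Measurable X) (hD : Measurable D) {v : ℝ≥0} (hv : v ≠ 0)
    (hDlaw : P.map D = gaussianReal 0 v) {σ r R : ℝ} (hσ : 0 < σ) (hr : 1 ≤ r) (hR : 4 ≤ R)
    (hRv : 216 ≤ σ * R * √v)
    (hX2r : ENNReal.ofReal (R ^ (2 * r)) ≤ ∫⁻ ω, ENNReal.ofReal (|X ω| ^ (2 * r)) ∂P) :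
    ENNReal.ofReal (R ^ r) ≤ ∫⁻ ω, ENNReal.ofReal (|X ω + σ * X ω * (1 - X ω) * D ω| ^ r) ∂P := by
  have hr0 : 0 ≤ r := zero_le_one.trans hr
  have hR0 : 0 < R := by linarith
  set c := (2 / σ) ^ r
  have hc0 : 0 < c := by positivity
  set B := ∫⁻ ω, ENNReal.ofReal (|σ * X ω * (1 - X ω)| ^ r) ∂P
  have hR2r : R ^ (2 * r) = R ^ r * R ^ r := by rw [two_mul, rpow_add hR0]
  have hB : ENNReal.ofReal (R ^ (2 * r) / 2 / c) ≤ B := by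
    rw [ENNReal.ofReal_div_of_pos hc0]
    refine ENNReal.div_le_of_le_mul' ?_
    have hsplit : ENNReal.ofReal (R ^ (2 * r)) ≤ ENNReal.ofReal c * B + ENNReal.ofReal (4 ^ r) :=
      calc _ ≤ ∫⁻ ω, ENNReal.ofReal (|X ω| ^ (2 * r)) ∂P := hX2r
        _ ≤ ∫⁻ ω, (ENNReal.ofReal c * ENNReal.ofReal (|σ * X ω * (1 - X ω)| ^ r)
              + ENNReal.ofReal (4 ^ r)) ∂P := by
            refine lintegral_mono fun ω => ?_
            rw [← ENNReal.ofReal_mul hc0.le, ← ENNReal.ofReal_add (by positivity) (by positivity)]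
            exact ENNReal.ofReal_le_ofReal (abs_rpow_two_mul_le_abs_mul_one_sub_rpow hσ hr0 _)
        _ = _ := by
            rw [lintegral_add_right _ measurable_const, lintegral_const, measure_univ, mul_one,
              lintegral_const_mul _ (by fun_prop)]
    have h4 : R ^ (2 * r) / 2 + 4 ^ r ≤ R ^ (2 * r) := by
      have h4r : 4 ≤ (4 : ℝ) ^ r := self_le_rpow_of_one_le (by norm_num) hr
      have hRr : (4 : ℝ) ^ r ≤ R ^ r := rpow_le_rpow (by norm_num) hR hr0
      rw [hR2r]
      nlinarith
    rw [← ENNReal.add_le_add_iff_right (ENNReal.ofReal_ne_top (r := 4 ^ r)),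
      ← ENNReal.ofReal_add (by positivity) (by positivity)]
    exact (ENNReal.ofReal_le_ofReal h4).trans hsplit
  have hcore := hXD.lintegral_abs_rpow_mul_gaussian_le hX hD (b := fun y => σ * y * (1 - y))
    (by fun_prop) hv hDlaw hr0
  have hreal : 2 * R ^ r ≤ R ^ (2 * r) / 2 / c * ((√(r * v) / 3) ^ r / 9) := by
    have hbase : 36 ≤ σ * R * √(r * v) / 6 := by
      have : √v ≤ √(r * v) := sqrt_le_sqrt (le_mul_of_one_le_left v.2 hr)
      have : σ * R * √v ≤ σ * R * √(r * v) := by gcongr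
      linarith
    have hpow : 36 ≤ (σ * R * √(r * v) / 6) ^ r :=
      hbase.trans (self_le_rpow_of_one_le (by linarith) hr)
    rw [show σ * R * √(r * v) / 6 = R / (2 / σ) * (√(r * v) / 3) by field_simp; ring,
      mul_rpow (by positivity) (by positivity), div_rpow hR0.le (by positivity)] at hpow
    rw [hR2r]
    calc 2 * R ^ r = R ^ r * 36 / 18 := by ring
      _ ≤ R ^ r * (R ^ r / c * (√(r * v) / 3) ^ r) / 18 := by gcongr
      _ = _ := by ring
  rw [← ENNReal.mul_le_mul_iff_right two_ne_zero ENNReal.ofNat_ne_top]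
  calc 2 * ENNReal.ofReal (R ^ r) = ENNReal.ofReal (2 * R ^ r) := by
        rw [ENNReal.ofReal_mul zero_le_two, ENNReal.ofReal_ofNat]
    _ ≤ ENNReal.ofReal (R ^ (2 * r) / 2 / c) * ENNReal.ofReal ((√(r * v) / 3) ^ r / 9) := by
        rw [← ENNReal.ofReal_mul (by positivity)]
        exact ENNReal.ofReal_le_ofReal hreal
    _ ≤ B * ENNReal.ofReal ((√(r * v) / 3) ^ r / 9) := by gcongr
    _ ≤ _ := hcore

lemma ofReal_rpow_le_lintegral_euler {N : ℕ} (hN : 1 ≤ N) {D Z : ℕ → Ω → ℝ}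
    (hD : ∀ k < N, Measurable (D k)) {v : ℝ≥0}
    (hv : v ≠ 0) (hDlaw : ∀ k < N, P.map (D k) = gaussianReal 0 v)
    (hind : iIndepFun (fun i : Fin N => D i) P) {σ x₀ : ℝ} (hσ : 0 < σ) (hZ0 : ∀ ω, Z 0 ω = x₀)
    (hZ : ∀ k < N, ∀ ω, Z (k + 1) ω = Z k ω + σ * Z k ω * (1 - Z k ω) * D k ω)
    {p R : ℝ} (hp : 1 ≤ p) (hR : 4 ≤ R) (hRv : 216 ≤ σ * R * √v)
    (hRx₀ : 54 * R ≤ |σ * x₀ * (1 - x₀)| * √(p * 2 ^ (N - 1) * v)) :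
    ENNReal.ofReal (R ^ p) ≤ ∫⁻ ω, ENNReal.ofReal (|Z N ω| ^ p) ∂P := by
  have hZm : ∀ k ≤ N, Measurable (Z k) := fun k hk =>
    (measurable_iSup_comap_of_euler hZ0 hZ k hk).mono
      (iSup₂_le fun i _ => (hD i i.isLt).comap_le) le_rfl
  have hexp : ∀ j : ℕ, 1 ≤ p * 2 ^ j := fun j =>
    one_le_mul_of_one_le_of_one_le hp (one_le_pow₀ one_le_two)
  have hmom : ∀ k, 1 ≤ k → k ≤ N →
      ENNReal.ofReal (R ^ (p * 2 ^ (N - k)))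
        ≤ ∫⁻ ω, ENNReal.ofReal (|Z k ω| ^ (p * 2 ^ (N - k))) ∂P := by
    intro k hk1
    induction k, hk1 using Nat.le_induction with
    | base =>
      intro _
      have hZ1 : ∀ ω, Z 1 ω = x₀ + σ * x₀ * (1 - x₀) * D 0 ω := fun ω => by
        rw [hZ 0 hN, hZ0]
      simp_rw [hZ1]
      exact ofReal_rpow_le_lintegral_euler_first_step (hD 0 hN) hv (hDlaw 0 hN) (hexp _)
        (by linarith) hRx₀
    | succ k _ ih =>
      intro hkN
      have hdouble : 2 * (p * 2 ^ (N - (k + 1))) = p * 2 ^ (N - k) := by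
        rw [show N - k = N - (k + 1) + 1 by omega, pow_succ]
        ring
      simp_rw [hZ k hkN]
      refine ofReal_rpow_le_lintegral_euler_step (indepFun_of_euler hD hind hZ0 hZ hkN)
        (hZm k (by omega)) (hD k hkN) hv (hDlaw k hkN) hσ (hexp _) hR hRv ?_
      rw [hdouble]
      exact ih (by omega)
  simpa using hmom N hN le_rfl

end

theorem stmt_19 {Ω : Type*} [MeasurableSpace Ω] (P : MeasureTheory.Measure Ω)
    [MeasureTheory.IsProbabilityMeasure P]
    (T : ℝ) (hT : 0 < T)
    (σ : ℝ) (hσ : 0 < σ) (x₀ : ℝ) (hx₀ : x₀ ∈ Set.Ioo (0 : ℝ) 1)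
    (W : ℝ → Ω → ℝ) (hW : IsStandardBrownianMotion P T W)
    (Y : ℕ → ℕ → Ω → ℝ)
    (hY0 : ∀ N, 1 ≤ N → ∀ ω, Y N 0 ω = x₀)
    (hYrec : ∀ N, 1 ≤ N → ∀ k < N, ∀ ω,
      Y N (k + 1) ω = Y N k ω + σ * Y N k ω * (1 - Y N k ω) * (W (((k : ℝ) + 1) * T / N) ω - W ((k : ℝ) * T / N) ω)) :
    ∀ p : ℝ, 1 ≤ p →
      Tendsto (fun N : ℕ => ∫⁻ ω, ENNReal.ofReal (|Y N N ω| ^ p) ∂(P : MeasureTheory.Measure Ω)) atTop (nhds ⊤) := by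
  intro p hp
  -- The moment bound holds with `R = a √N`, for which `σ R √(T / N) = σ a √T ≥ 216`.
  set a := max 4 (216 / (σ * √T))
  have ha : 0 < a := by positivity
  have hb : σ * x₀ * (1 - x₀) ≠ 0 :=
    mul_ne_zero (mul_ne_zero hσ.ne' hx₀.1.ne') (sub_ne_zero.mpr hx₀.2.ne')
  have hmom : ∀ᶠ N : ℕ in atTop,
      ENNReal.ofReal ((a * √N) ^ p) ≤ ∫⁻ ω, ENNReal.ofReal (|Y N N ω| ^ p) ∂P := by
    filter_upwards [eventually_ge_atTop 1, eventually_mul_sqrt_le_mul_sqrt_two_pow_pred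
      (by positivity : 0 ≤ 54 * a) hb (p := p) (by linarith) hT] with N hN hgrowth
    have hN0 : (0 : ℝ) < N := by exact_mod_cast hN
    have hv : ((T / N).toNNReal : ℝ) = T / N := Real.coe_toNNReal _ (by positivity)
    refine ofReal_rpow_le_lintegral_euler hN (fun k hk => hW.measurable_brownianIncrement hT.le hk)
      (by simp [hT, hN0]) (fun k hk => hW.map_brownianIncrement hT.le hk)
      (hW.iIndepFun_brownianIncrement hT.le N) hσ (hY0 N hN) (hYrec N hN) hp ?_ ?_
      (by rwa [hv, ← mul_assoc])
    · exact (le_max_left _ _).trans (le_mul_of_one_le_right ha.le (by simpa using hN))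
    · have hsqrt : √(N : ℝ) * √(T / N) = √T := by
        rw [← sqrt_mul hN0.le, mul_div_cancel₀ _ hN0.ne']
      calc (216 : ℝ) = 216 / (σ * √T) * (σ * √T) := by field_simp
        _ ≤ a * (σ * √T) := by gcongr; exact le_max_right _ _
        _ = _ := by rw [hv, ← hsqrt]; ring
  refine tendsto_nhds_top_mono (ENNReal.tendsto_ofReal_atTop.comp ?_) hmom
  exact (tendsto_rpow_atTop (by linarith)).comp
    ((tendsto_sqrt_atTop.comp tendsto_natCast_atTop_atTop).const_mul_atTop ha)
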